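/- Let F, F' be n-step isotropic flags in F_q^{2r} and define the refinement F_{i,j} = F_{i-1} + (F_i ∩ F'_j) for 1 ≤ i,j ≤ N = 2n+1. Then the resulting chain of subspaces, ordered lexicographically in (i,j), forms an isotropic partial flag: each F_{i,j} with (i-1)N + j ≤ n(N+1) is isotropic, and (F_{i,j})^⊥ = F_{N+1-i, N-j} for the appropriate complementary indices. -/

import Mathlib

/-- The hyperbolic symmetric bilinear form `⟨x,y⟩ = ∑ i, x i * y (rev i)` on `K^{2r}`. -/
def formJ {K : Type*} [CommRing K] {m : ℕ} (x y : Fin m → K) : K :=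
  ∑ i, x i * y i.rev

/-- An `n`-step isotropic flag in `K^{2r}` (extended to `N = 2n+1` steps):
`0 = F_0 ⊆ F_1 ⊆ ⋯ ⊆ F_N = K^{2r}` with `F_{N-i} = F_i^⊥` for `i ≤ n`. -/
structure IsotropicFlag (K : Type*) [Field K] (n r : ℕ) where
  F : ℕ → Submodule K (Fin (2 * r) → K)
  bot : F 0 = ⊥
  top : F (2 * n + 1) = ⊤
  mono : Monotone F
  perp : ∀ i ≤ n, ((F (2 * n + 1 - i) : Set (Fin (2 * r) → K)))
    = {x | ∀ y ∈ F i, formJ x y = 0}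

/-- The refinement `F_{i,j} = F_{i-1} + (F_i ∩ F'_j)` (1-based indices `i, j`). -/
def refineStep {K : Type*} [Field K] {n r : ℕ} (Fl Fl' : IsotropicFlag K n r)
    (i j : ℕ) : Submodule K (Fin (2 * r) → K) :=
  Fl.F (i - 1) ⊔ (Fl.F i ⊓ Fl'.F j)

/-!
The orthogonal complement with respect to a nondegenerate symmetric form on a finite-dimensional
space is an inclusion-reversing involution, so it exchanges `⊔` and `⊓`. Since `F_{i-1} ≤ F_i`, the
modular law turns `(F_{i-1} + F_i ∩ F'_j)^⊥ = F_{i-1}^⊥ ∩ (F_i^⊥ + F'_j^⊥)` into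
`F_i^⊥ + F_{i-1}^⊥ ∩ F'_j^⊥ = F_{N+1-i, N-j}`. The chain `F_{i,j}` increases lexicographically, so
`F_{i,j}` lies in its orthogonal `F_{N+1-i,N-j}` as soon as `(i,j)` precedes `(N+1-i,N-j)`,
which is what the numerical condition says.
-/

namespace LinearMap.BilinForm

variable {R M : Type*} [CommRing R] [AddCommGroup M] [Module R M]

theorem orthogonal_sup (B : LinearMap.BilinForm R M) (U W : Submodule R M) :
    B.orthogonal (U ⊔ W) = B.orthogonal U ⊓ B.orthogonal W := by
  refine le_antisymm (le_inf (B.orthogonal_le le_sup_left) (B.orthogonal_le le_sup_right)) ?_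
  rintro x ⟨hU, hW⟩ _ hy
  obtain ⟨u, hu, w, hw, rfl⟩ := Submodule.mem_sup.mp hy
  rw [map_add, LinearMap.add_apply, hU u hu, hW w hw, add_zero]

variable {K V : Type*} [Field K] [AddCommGroup V] [Module K V] [FiniteDimensional K V]
  {B : LinearMap.BilinForm K V}

theorem orthogonal_inf (hB : B.Nondegenerate) (hB₀ : B.IsRefl) (U W : Submodule K V) :
    B.orthogonal (U ⊓ W) = B.orthogonal U ⊔ B.orthogonal W := by
  conv_lhs => rw [← B.orthogonal_orthogonal hB hB₀ U, ← B.orthogonal_orthogonal hB hB₀ W,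
    ← orthogonal_sup]
  exact B.orthogonal_orthogonal hB hB₀ _

theorem orthogonal_sup_inf_of_le (hB : B.Nondegenerate) (hB₀ : B.IsRefl)
    {A C : Submodule K V} (hAC : A ≤ C) (D : Submodule K V) :
    B.orthogonal (A ⊔ C ⊓ D) = B.orthogonal C ⊔ B.orthogonal A ⊓ B.orthogonal D := by
  rw [orthogonal_sup, orthogonal_inf hB hB₀, inf_comm, sup_inf_assoc_of_le _ (B.orthogonal_le hAC),
    inf_comm]

end LinearMap.BilinForm

open LinearMap.BilinForm

section FormJ

variable {K : Type*} [Field K] {m : ℕ}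

theorem formJ_comm (x y : Fin m → K) : formJ x y = formJ y x := by
  unfold formJ
  rw [← Equiv.sum_comp Fin.revPerm]
  simp [mul_comm]

variable (K m) in
def formJBilin : LinearMap.BilinForm K (Fin m → K) :=
  LinearMap.mk₂ K formJ
    (fun x x' y => by simp [formJ, add_mul, Finset.sum_add_distrib])
    (fun c x y => by simp [formJ, Finset.mul_sum, mul_assoc])
    (fun x y y' => by simp [formJ, mul_add, Finset.sum_add_distrib])
    (fun c x y => by simp [formJ, Finset.mul_sum, mul_left_comm])

@[simp] theorem formJBilin_apply (x y : Fin m → K) : formJBilin K m x y = formJ x y := rfl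

theorem formJBilin_isRefl : (formJBilin K m).IsRefl :=
  IsSymm.isRefl ⟨formJ_comm⟩

theorem formJBilin_nondegenerate : (formJBilin K m).Nondegenerate := by
  refine (LinearMap.IsRefl.nondegenerate_iff_separatingLeft (B := formJBilin K m)
    formJBilin_isRefl).mpr fun x hx ↦ funext fun i ↦ ?_
  simpa [formJ, Pi.single_apply] using hx (Pi.single i.rev 1)

theorem coe_orthogonal_formJBilin (W : Submodule K (Fin m → K)) :
    ((formJBilin K m).orthogonal W : Set (Fin m → K)) = {x | ∀ y ∈ W, formJ x y = 0} := by
  ext x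
  simp [formJ_comm _ x]

end FormJ

namespace IsotropicFlag

variable {K : Type*} [Field K] {n r : ℕ}

theorem orthogonal_F (Fl : IsotropicFlag K n r) {i : ℕ} (hi : i ≤ 2 * n + 1) :
    (formJBilin K (2 * r)).orthogonal (Fl.F i) = Fl.F (2 * n + 1 - i) := by
  have perp (k : ℕ) (hk : k ≤ n) :
      (formJBilin K (2 * r)).orthogonal (Fl.F k) = Fl.F (2 * n + 1 - k) :=
    SetLike.coe_injective (by rw [coe_orthogonal_formJBilin, Fl.perp k hk])
  rcases le_or_gt i n with h | h
  · exact perp i h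
  · have hk : i = 2 * n + 1 - (2 * n + 1 - i) := by omega
    rw [hk, ← perp _ (by omega), orthogonal_orthogonal formJBilin_nondegenerate formJBilin_isRefl,
      ← hk]

end IsotropicFlag

section Refinement

variable {K : Type*} [Field K] {n r : ℕ} (Fl Fl' : IsotropicFlag K n r)

theorem refineStep_le_refineStep {i j i' j' : ℕ} (h : i < i' ∨ i = i' ∧ j ≤ j') :
    refineStep Fl Fl' i j ≤ refineStep Fl Fl' i' j' := by
  rcases h with h | ⟨rfl, h⟩
  · exact (sup_le (Fl.mono (by omega)) inf_le_left).trans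
      ((Fl.mono (by omega)).trans le_sup_left)
  · exact sup_le_sup_left (inf_le_inf_left _ (Fl'.mono h)) _

theorem orthogonal_refineStep {i j : ℕ} (hi : 1 ≤ i) (hiN : i ≤ 2 * n + 1) (hjN : j ≤ 2 * n + 1) :
    (formJBilin K (2 * r)).orthogonal (refineStep Fl Fl' i j)
      = refineStep Fl Fl' (2 * n + 1 + 1 - i) (2 * n + 1 - j) := by
  rw [refineStep, refineStep, orthogonal_sup_inf_of_le formJBilin_nondegenerate formJBilin_isRefl
    (Fl.mono (Nat.sub_le i 1)), Fl.orthogonal_F hiN, Fl.orthogonal_F (by omega),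
    Fl'.orthogonal_F hjN, show 2 * n + 1 + 1 - i - 1 = 2 * n + 1 - i by omega,
    show 2 * n + 1 + 1 - i = 2 * n + 1 - (i - 1) by omega]

end Refinement

theorem lex_le_of_mul_add_le {n i j : ℕ} (hi : 1 ≤ i) (hjN : j ≤ 2 * n + 1)
    (hij : (i - 1) * (2 * n + 1) + j ≤ n * (2 * n + 2)) :
    i < 2 * n + 1 + 1 - i ∨ i = 2 * n + 1 + 1 - i ∧ j ≤ 2 * n + 1 - j := by
  obtain ⟨k, rfl⟩ : ∃ k, i = k + 1 := ⟨i - 1, by omega⟩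
  rw [add_tsub_cancel_right] at hij
  have hk : k ≤ n := by
    by_contra! hk
    nlinarith [Nat.mul_le_mul_right (2 * n + 1) hk]
  rcases hk.lt_or_eq with hk | rfl
  · omega
  · have : j ≤ k := by nlinarith
    omega

/-- For `n`-step isotropic flags `F, F'` in `K^{2r}`, the refinement
`F_{i,j} = F_{i-1} + (F_i ∩ F'_j)` (ordered lexicographically in `(i,j)`, `N = 2n+1`)
forms an isotropic partial flag: each `F_{i,j}` with `(i-1)N + j ≤ n(N+1)` is
isotropic, and `(F_{i,j})^⊥ = F_{N+1-i, N-j}`. -/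
theorem refinement_isotropic_flag (K : Type*) [Field K] (n r : ℕ)
    (Fl Fl' : IsotropicFlag K n r) :
    (∀ i j : ℕ, 1 ≤ i → i ≤ 2 * n + 1 → j ≤ 2 * n + 1 →
      (i - 1) * (2 * n + 1) + j ≤ n * (2 * n + 2) →
      ∀ x ∈ refineStep Fl Fl' i j, ∀ y ∈ refineStep Fl Fl' i j, formJ x y = 0) ∧
    (∀ i j : ℕ, 1 ≤ i → i ≤ 2 * n + 1 → 1 ≤ j → j ≤ 2 * n + 1 →
      {x | ∀ y ∈ refineStep Fl Fl' i j, formJ x y = 0}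
        = ((refineStep Fl Fl' (2 * n + 1 + 1 - i) (2 * n + 1 - j) :
            Submodule K (Fin (2 * r) → K)) : Set (Fin (2 * r) → K))) := by
  refine ⟨fun i j hi hiN hjN hij x hx ↦ ?_, fun i j hi hiN _ hjN ↦ ?_⟩
  · have hx' := refineStep_le_refineStep Fl Fl' (lex_le_of_mul_add_le hi hjN hij) hx
    rw [← orthogonal_refineStep Fl Fl' hi hiN hjN, ← SetLike.mem_coe,
      coe_orthogonal_formJBilin] at hx'
    exact hx'
  · rw [← orthogonal_refineStep Fl Fl' hi hiN hjN, coe_orthogonal_formJBilin]
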